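/- Let G be a 0-cop-win graph of finite corner rank α ≥ 2. Then for every vertex c of G there exists a vertex r with cr(r) ≥ α−1 such that some c' ∈ F_{α−1}(c) is not adjacent to r (i.e. an (α−1)-proj-safe vertex exists no matter where the cop stands). -/
import Mathlib


open Classical

/-- A finite reflexive graph: adjacency is symmetric and every vertex is
adjacent to itself (closed neighborhood `N[v] = {u | Adj v u}`). -/
structure RefGraph (V : Type*) where
  Adj : V → V → Prop
  symm : ∀ u v, Adj u v → Adj v u
  refl : ∀ v, Adj v v

namespace RefGraph

variable {V : Type*}

/-- `w` strictly corners `v` within the induced subgraph on `S`,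
i.e. `N_S[v] ⊊ N_S[w]`. -/
def StrictCornersIn (G : RefGraph V) (S : Set V) (w v : V) : Prop :=
  w ∈ S ∧ v ∈ S ∧ (∀ u ∈ S, G.Adj v u → G.Adj w u) ∧ ∃ u ∈ S, G.Adj w u ∧ ¬ G.Adj v u

/-- `v` is a strict corner of the induced subgraph on `S`. -/
def IsStrictCorner (G : RefGraph V) (S : Set V) (v : V) : Prop :=
  ∃ w, G.StrictCornersIn S w v

/-- `S` induces a clique. -/
def IsCliqueSet (G : RefGraph V) (S : Set V) : Prop :=
  ∀ u ∈ S, ∀ v ∈ S, G.Adj u v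

/-- `lvl k` is the vertex set of the graph `G_{k+1}` of the corner ranking
procedure: start with all vertices and repeatedly delete all strict corners. -/
def lvl (G : RefGraph V) : ℕ → Set V
  | 0 => Set.univ
  | k + 1 => {v ∈ G.lvl k | ¬ G.IsStrictCorner (G.lvl k) v}

/-- The corner rank of a vertex: the stage (1-indexed) at which it is a strict
corner, or at which the remaining graph is a clique; `∞` if neither ever occurs. -/
noncomputable def cr (G : RefGraph V) (v : V) : ℕ∞ :=
  sInf {n : ℕ∞ | ∃ m : ℕ, n = (m : ℕ∞) + 1 ∧ v ∈ G.lvl m ∧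
    (G.IsStrictCorner (G.lvl m) v ∨ G.IsCliqueSet (G.lvl m))}

/-- The vertex set of `Gₖ`: the vertices of corner rank at least `k`. -/
def GkSet (G : RefGraph V) (k : ℕ) : Set V := {v | (k : ℕ∞) ≤ G.cr v}

/-- The corner rank of the graph: the largest corner rank of a vertex. -/
noncomputable def crGraph (G : RefGraph V) [Fintype V] : ℕ∞ :=
  Finset.univ.sup fun v => G.cr v

/-- The projection map `fₖ` on a single vertex `u` of `Gₖ`. -/
noncomputable def fk (G : RefGraph V) (k : ℕ) (u : V) : Set V :=
  if (k : ℕ∞) < G.cr u then {u}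
  else {w | w ∈ G.GkSet (k + 1) ∧ G.StrictCornersIn (G.GkSet k) w u}

/-- The projection map `Fₖ`: `F₁` is the identity and `Fₖ₊₁ = fₖ ∘ Fₖ`. -/
noncomputable def Fk (G : RefGraph V) : ℕ → V → Set V
  | 0, v => {v}
  | 1, v => {v}
  | k + 2, v => ⋃ u ∈ G.Fk (k + 1) v, G.fk (k + 1) u

/-- `r` is `k`-cornered by `c`: for `k = 0`, `c = r`; for `k ≥ 1`, some
`r' ∈ Fₖ(r)` is cornered by `c` in the subgraph induced by `V(Gₖ) ∪ {c}`. -/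
def kCornered (G : RefGraph V) : ℕ → V → V → Prop
  | 0, c, r => c = r
  | k + 1, c, r => ∃ r' ∈ G.Fk (k + 1) r,
      ∀ u, (u ∈ G.GkSet (k + 1) ∨ u = c) → G.Adj r' u → G.Adj c u

/-- With the cop at `c`, the vertex `r` is `k`-proj-safe: `cr r ≥ k` and some
`c' ∈ Fₖ(c)` is not adjacent to `r`. -/
def ProjSafe (G : RefGraph V) (k : ℕ) (c r : V) : Prop :=
  (k : ℕ∞) ≤ G.cr r ∧ ∃ c' ∈ G.Fk k c, ¬ G.Adj c' r

/-- The cop at `c` can win within `k` cop moves against the robber at `r`,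
robber to move. -/
def WinWithin (G : RefGraph V) : ℕ → V → V → Prop
  | 0, c, r => c = r
  | k + 1, c, r => c = r ∨ ∀ r₁, G.Adj r r₁ → ∃ c₁, G.Adj c c₁ ∧ G.WinWithin k c₁ r₁

/-- The cop at `c` can guarantee catching the robber at `r` within `n` cop
moves, cop to move. -/
def CanCatch (G : RefGraph V) : ℕ → V → V → Prop
  | 0, c, r => c = r
  | n + 1, c, r => c = r ∨ ∃ c', G.Adj c c' ∧
      (c' = r ∨ ∀ r', G.Adj r r' → G.CanCatch n c' r')

/-- The cop has a winning strategy: some initial placement from which she can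
guarantee capture in some bounded number of moves, whatever the robber does. -/
def CopWin (G : RefGraph V) : Prop :=
  ∃ (n : ℕ) (c₀ : V), ∀ r₀ : V, G.CanCatch n c₀ r₀

/-- The capture time: the least `n` such that the cop has an initial placement
guaranteeing capture within `n` cop moves. -/
noncomputable def capt (G : RefGraph V) : ℕ :=
  sInf {n : ℕ | ∃ c₀ : V, ∀ r₀ : V, G.CanCatch n c₀ r₀}

/-- A graph of finite corner rank `α` is `1`-cop-win if some vertex of corner
rank `α` is adjacent to every vertex of `G_{α-1}`. -/
def OneCopWin (G : RefGraph V) (α : ℕ) : Prop :=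
  ∃ x, G.cr x = (α : ℕ∞) ∧ ∀ u, ((α - 1 : ℕ) : ℕ∞) ≤ G.cr u → G.Adj x u

/-- `r`-cop-win for `r ∈ {0,1}`. -/
def RCopWin (G : RefGraph V) (r α : ℕ) : Prop :=
  (r = 1 ∧ G.OneCopWin α) ∨ (r = 0 ∧ ¬ G.OneCopWin α)

/-- The largest finite corner rank occurring in `G` (0 if none occurs). -/
noncomputable def gammaMax (G : RefGraph V) : ℕ :=
  sSup {n : ℕ | ∃ v, G.cr v = (n : ℕ∞)}

/-- `F_∞`: equal to `F_{γ+1}` where `γ` is the largest finite corner rank, and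
the identity (`F₁`) when no vertex has finite corner rank. -/
noncomputable def Finf (G : RefGraph V) : V → Set V :=
  G.Fk (G.gammaMax + 1)

/-- `e` lists the vertices as a dismantling ordering: every vertex except the
last is cornered, in the induced subgraph on it and the later vertices, by some
later vertex. -/
def IsDismantlingOrdering (G : RefGraph V) {n : ℕ} (e : Fin n ≃ V) : Prop :=
  ∀ i : Fin n, (i : ℕ) + 1 < n →
    ∃ j : Fin n, i < j ∧ e j ≠ e i ∧
      ∀ u, (∃ m : Fin n, i ≤ m ∧ e m = u) → G.Adj (e i) u → G.Adj (e j) u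

/-- `G` has a dismantling ordering. -/
def HasDismantling (G : RefGraph V) [Fintype V] : Prop :=
  ∃ e : Fin (Fintype.card V) ≃ V, G.IsDismantlingOrdering e

end RefGraph
namespace RefGraph

variable {V : Type*}

lemma lvl_succ_subset' (G : RefGraph V) (k : ℕ) : G.lvl (k+1) ⊆ G.lvl k :=
  fun _ hv => hv.1

lemma lvl_subset' (G : RefGraph V) {j k : ℕ} (h : j ≤ k) : G.lvl k ⊆ G.lvl j := by
  induction k with
  | zero =>
    have : j = 0 := Nat.le_zero.mp h
    subst this; exact subset_rfl
  | succ n ih =>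
    rcases Nat.lt_or_ge j (n+1) with h' | h'
    · exact (G.lvl_succ_subset' n).trans (ih (Nat.lt_succ_iff.mp h'))
    · have : j = n + 1 := le_antisymm h h'
      subst this; exact subset_rfl

lemma one_le_cr' (G : RefGraph V) (v : V) : 1 ≤ G.cr v := by
  apply le_sInf
  rintro n ⟨m, rfl, -⟩
  exact le_add_self

lemma cr_le_of' (G : RefGraph V) {v : V} {m : ℕ} (h1 : v ∈ G.lvl m)
    (h2 : G.IsStrictCorner (G.lvl m) v ∨ G.IsCliqueSet (G.lvl m)) :
    G.cr v ≤ (m : ℕ∞) + 1 :=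
  sInf_le ⟨m, rfl, h1, h2⟩

lemma cr_mem' (G : RefGraph V) {v : V} {n : ℕ} (h : G.cr v = (n : ℕ∞)) :
    ∃ m : ℕ, (n : ℕ∞) = (m : ℕ∞) + 1 ∧ v ∈ G.lvl m ∧
      (G.IsStrictCorner (G.lvl m) v ∨ G.IsCliqueSet (G.lvl m)) := by
  have hne : {n' : ℕ∞ | ∃ m : ℕ, n' = (m : ℕ∞) + 1 ∧ v ∈ G.lvl m ∧
      (G.IsStrictCorner (G.lvl m) v ∨ G.IsCliqueSet (G.lvl m))}.Nonempty := by
    by_contra hemp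
    rw [Set.not_nonempty_iff_eq_empty] at hemp
    have : G.cr v = ⊤ := by rw [cr, hemp, sInf_empty]
    rw [h] at this
    exact (ENat.coe_ne_top n) this
  have := csInf_mem hne
  rw [← cr, h] at this
  exact this

lemma mem_lvl_of_cr' (G : RefGraph V) {v : V} {k : ℕ} (h : (k : ℕ∞) + 1 ≤ G.cr v) :
    v ∈ G.lvl k := by
  induction k with
  | zero => trivial
  | succ n ih =>
    have h1 : (n : ℕ∞) + 1 ≤ G.cr v := by
      refine le_trans ?_ h
      push_cast
      exact le_add_of_nonneg_right (by simp)
    have hmem := ih h1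
    refine ⟨hmem, fun hc => ?_⟩
    have h2 := G.cr_le_of' hmem (Or.inl hc)
    have h3 : ((n:ℕ∞) + 1) + 1 ≤ (n:ℕ∞) + 1 := le_trans (by push_cast; ring_nf; exact le_rfl) (h.trans h2)
    have : ((n+1+1 : ℕ) : ℕ∞) ≤ ((n+1 : ℕ) : ℕ∞) := by push_cast; exact h3
    have : n + 1 + 1 ≤ n + 1 := by exact_mod_cast this
    omega

lemma strict_corner_of_not_mem' (G : RefGraph V) {v : V} {j : ℕ} (h : v ∉ G.lvl j) :
    ∃ i, i + 1 ≤ j ∧ v ∈ G.lvl i ∧ G.IsStrictCorner (G.lvl i) v := by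
  induction j with
  | zero => exact absurd trivial h
  | succ n ih =>
    by_cases hn : v ∈ G.lvl n
    · refine ⟨n, le_refl _, hn, ?_⟩
      by_contra hc
      exact h ⟨hn, hc⟩
    · obtain ⟨i, hi, h1, h2⟩ := ih hn
      exact ⟨i, hi.trans (Nat.le_succ n), h1, h2⟩

lemma cr_le_of_clique' (G : RefGraph V) {j : ℕ} (h : G.IsCliqueSet (G.lvl j)) (v : V) :
    G.cr v ≤ (j : ℕ∞) + 1 := by
  by_cases hv : v ∈ G.lvl j
  · exact G.cr_le_of' hv (Or.inr h)
  · obtain ⟨i, hi, h1, h2⟩ := G.strict_corner_of_not_mem' hv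
    refine le_trans (G.cr_le_of' h1 (Or.inl h2)) ?_
    have : ((i+1 : ℕ) : ℕ∞) ≤ ((j+1 : ℕ) : ℕ∞) := by exact_mod_cast (by omega : i + 1 ≤ j + 1)
    push_cast at this
    exact this

lemma no_clique' (G : RefGraph V) [Fintype V] {α j : ℕ}
    (hα : G.crGraph = (α : ℕ∞)) (hj : j + 1 < α) :
    ¬ G.IsCliqueSet (G.lvl j) := by
  intro h
  have h1 : G.crGraph ≤ (j:ℕ∞)+1 := Finset.sup_le fun v _ => G.cr_le_of_clique' h v
  rw [hα] at h1
  have : (α : ℕ∞) ≤ ((j+1 : ℕ) : ℕ∞) := by push_cast; exact h1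
  have : α ≤ j + 1 := by exact_mod_cast this
  omega

lemma cr_ge_of_mem_lvl' (G : RefGraph V) [Fintype V] {α k : ℕ} {v : V}
    (hα : G.crGraph = (α : ℕ∞)) (hk : k + 1 ≤ α) (hv : v ∈ G.lvl k) :
    (k:ℕ∞) + 1 ≤ G.cr v := by
  apply le_sInf
  rintro n ⟨m, rfl, hm1, hm2⟩
  by_contra hlt
  push_neg at hlt
  have hmk : m < k := by
    have : ((m+1:ℕ):ℕ∞) < ((k+1:ℕ):ℕ∞) := by push_cast; exact hlt
    have : m + 1 < k + 1 := by exact_mod_cast this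
    omega
  rcases hm2 with hc | hc
  · exact (G.lvl_subset' (show m+1 ≤ k by omega) hv).2 hc
  · exact G.no_clique' hα (show m + 1 < α by omega) hc

lemma gkset_eq_lvl' (G : RefGraph V) [Fintype V] {α k : ℕ}
    (hα : G.crGraph = (α : ℕ∞)) (hk : k + 1 ≤ α) :
    G.GkSet (k+1) = G.lvl k := by
  ext v
  constructor
  · intro hv
    exact G.mem_lvl_of_cr' (by have : ((k+1:ℕ):ℕ∞) ≤ G.cr v := hv; push_cast at this; exact this)
  · intro hv
    show ((k+1:ℕ):ℕ∞) ≤ G.cr v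
    push_cast
    exact G.cr_ge_of_mem_lvl' hα hk hv

lemma cr_le_crGraph' (G : RefGraph V) [Fintype V] (v : V) : G.cr v ≤ G.crGraph :=
  Finset.le_sup (Finset.mem_univ v)

lemma corner_promote' (G : RefGraph V) [Fintype V] {α k : ℕ} {u : V}
    (hα : G.crGraph = (α : ℕ∞)) (hk1 : 1 ≤ k) (hkα : k < α) (hu : G.cr u = (k : ℕ∞)) :
    ∃ w, ((k:ℕ∞) + 1 ≤ G.cr w) ∧ G.StrictCornersIn (G.GkSet k) w u := by
  obtain ⟨m, hm, hmem, hcc⟩ := G.cr_mem' hu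
  have hmk : k = m + 1 := by exact_mod_cast hm
  rcases hcc with hcor | hcl
  swap
  · exact absurd hcl (G.no_clique' hα (by omega))
  obtain ⟨w₀, hw₀⟩ := hcor
  set S := G.lvl m with hS
  set T := {w | G.StrictCornersIn S w u} with hT
  have hTne : T.Nonempty := ⟨w₀, hw₀⟩
  obtain ⟨w, hwT, hwmax⟩ := Set.exists_max_image T
    (fun w => {x | x ∈ S ∧ G.Adj w x}.ncard) (Set.toFinite T) hTne
  have hwns : ¬ G.IsStrictCorner S w := by
    rintro ⟨w', hw'⟩
    have hT' : w' ∈ T := by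
      refine ⟨hw'.1, hwT.2.1, fun x hx hadj => hw'.2.2.1 x hx (hwT.2.2.1 x hx hadj), ?_⟩
      obtain ⟨x, hxS, ha, hna⟩ := hw'.2.2.2
      exact ⟨x, hxS, ha, fun hux => hna (hwT.2.2.1 x hxS hux)⟩
    have hss : {x | x ∈ S ∧ G.Adj w x} ⊂ {x | x ∈ S ∧ G.Adj w' x} := by
      constructor
      · rintro x ⟨hxS, hx⟩; exact ⟨hxS, hw'.2.2.1 x hxS hx⟩
      · obtain ⟨x, hxS, ha, hna⟩ := hw'.2.2.2
        intro hsub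
        exact hna (hsub ⟨hxS, ha⟩).2
    have := Set.ncard_lt_ncard hss (Set.toFinite _)
    exact absurd (hwmax w' hT') (by omega)
  have hwlvl : w ∈ G.lvl (m+1) := ⟨hwT.1, hwns⟩
  have hGk : G.GkSet k = S := by rw [hmk]; exact G.gkset_eq_lvl' hα (by omega)
  refine ⟨w, ?_, ?_⟩
  · have := G.cr_ge_of_mem_lvl' hα (show (m+1) + 1 ≤ α by omega) hwlvl
    have h2 : ((m+1:ℕ):ℕ∞) + 1 ≤ G.cr w := by push_cast; push_cast at this; exact this
    rw [hmk]; push_cast; push_cast at h2; exact h2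
  · rw [hGk]; exact hwT

lemma fk_subset' (G : RefGraph V) (k : ℕ) (u : V) (hu : u ∈ G.GkSet k) :
    G.fk k u ⊆ G.GkSet (k+1) := by
  intro w hw
  rw [fk] at hw
  split_ifs at hw with h
  · rw [Set.mem_singleton_iff] at hw
    subst hw
    show ((k+1:ℕ):ℕ∞) ≤ G.cr w
    push_cast
    exact (ENat.add_one_le_iff (by simp)).mpr h
  · exact hw.1

lemma fk_nonempty' (G : RefGraph V) [Fintype V] {α k : ℕ}
    (hα : G.crGraph = (α : ℕ∞)) (hk1 : 1 ≤ k) (hkα : k < α)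
    (u : V) (hu : u ∈ G.GkSet k) : (G.fk k u).Nonempty := by
  rw [fk]
  split_ifs with h
  · exact ⟨u, rfl⟩
  · have hcr : G.cr u = (k : ℕ∞) := le_antisymm (not_lt.mp h) hu
    obtain ⟨w, hw1, hw2⟩ := G.corner_promote' hα hk1 hkα hcr
    refine ⟨w, ?_, hw2⟩
    show ((k+1:ℕ):ℕ∞) ≤ G.cr w
    push_cast
    exact hw1

lemma Fk_spec' (G : RefGraph V) [Fintype V] {α : ℕ}
    (hα : G.crGraph = (α : ℕ∞)) (c : V) :
    ∀ k, 1 ≤ k → k ≤ α → (G.Fk k c).Nonempty ∧ G.Fk k c ⊆ G.GkSet k := by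
  intro k
  induction k with
  | zero => omega
  | succ n ih =>
    intro _ hle
    rcases n with _ | m
    ·
      refine ⟨⟨c, rfl⟩, ?_⟩
      intro x _
      show ((1:ℕ):ℕ∞) ≤ G.cr x
      push_cast
      exact G.one_le_cr' x
    · obtain ⟨⟨u0, hu0⟩, hsub⟩ := ih (by omega) (by omega)
      have hstep : G.Fk (m+2) c = ⋃ u ∈ G.Fk (m+1) c, G.fk (m+1) u := rfl
      constructor
      · obtain ⟨w, hw⟩ := G.fk_nonempty' hα (show 1 ≤ m+1 by omega) (show m+1 < α by omega)
          u0 (hsub hu0)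
        rw [hstep]
        exact ⟨w, Set.mem_biUnion hu0 hw⟩
      · rw [hstep]
        intro x hx
        obtain ⟨u, hu, hxu⟩ := Set.mem_iUnion₂.mp hx
        exact G.fk_subset' (m+1) u (hsub hu) hxu

end RefGraph

/-- If `G` is `0`-cop-win of finite corner rank `α ≥ 2`, then for
every cop position `c` there is an `(α-1)`-proj-safe vertex: some `r` with
`cr(r) ≥ α - 1` and some `c' ∈ F_{α-1}(c)` not adjacent to `r`. -/
theorem proj_safe_start_zero_cop_win
    {V : Type*} [Fintype V] [Nonempty V] (G : RefGraph V)
    (α : ℕ) (hα2 : 2 ≤ α) (hα : G.crGraph = (α : ℕ∞))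
    (h0 : ¬ G.OneCopWin α) :
    ∀ c : V, ∃ r : V, ((α - 1 : ℕ) : ℕ∞) ≤ G.cr r ∧
      ∃ c' ∈ G.Fk (α - 1) c, ¬ G.Adj c' r := by
  intro c
  by_contra hcon
  push_neg at hcon
  obtain ⟨⟨c', hc'⟩, hsub⟩ := G.Fk_spec' hα c (α-1) (by omega) (by omega)
  have hc'G : ((α-1:ℕ):ℕ∞) ≤ G.cr c' := hsub hc'
  have hadj : ∀ r, ((α-1:ℕ):ℕ∞) ≤ G.cr r → G.Adj c' r := fun r hr => hcon r hr c' hc'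
  by_cases hcr : G.cr c' = ((α-1 : ℕ) : ℕ∞)
  · obtain ⟨w, hw1, hw2⟩ := G.corner_promote' hα (by omega) (by omega : α - 1 < α) hcr
    obtain ⟨x, hxS, hx1, hx2⟩ := hw2.2.2.2
    exact hx2 (hadj x hxS)
  · have h1 : ((α-1:ℕ):ℕ∞) < G.cr c' := lt_of_le_of_ne hc'G (Ne.symm hcr)
    have h2 : ((α:ℕ):ℕ∞) ≤ G.cr c' := by
      have hle := (ENat.add_one_le_iff (by simp : ((α-1:ℕ):ℕ∞) ≠ ⊤)).mpr h1
      have heq : ((α-1:ℕ):ℕ∞) + 1 = ((α:ℕ):ℕ∞) := by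
        rw [show ((α-1:ℕ):ℕ∞) + 1 = ((α-1+1:ℕ):ℕ∞) by push_cast; ring]
        congr 1
        omega
      rwa [heq] at hle
    have h3 : G.cr c' ≤ (α:ℕ∞) := hα ▸ G.cr_le_crGraph' c'
    exact h0 ⟨c', le_antisymm h3 h2, fun u hu => hadj u hu⟩
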